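/- arXiv:2405.05100 — 5 statements merged into one kernel-verified Lean document; each statement's English description precedes it below -/
import Mathlib

section
/- Let M ≥ 2 be an integer and let g, p : ℝ → ℝ be nonnegative even functions that are nonincreasing on [0, ∞) and Lipschitz continuous, with g bounded and p integrable. Then for every nonempty finite set Γ ⊆ ℝ with |Γ| ≤ M − 1, one has ∫_ℝ (max_{γ∈Γ} g(x − γ)) · p(x) dx ≤ ∫_ℝ g(x/(M−1)) · p(x) dx. -/
/-!
Write `ν` for the measure with density `p`. By the layer cake formula it suffices to compare, for
every level `t`, the `ν`-measures of the superlevel sets of the two integrands. As `g` is even and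
nonincreasing in `|x|`, its superlevel set `S = {g > t}` is a centred interval of length `2R`, so
the superlevel set of the maximum of translates is a union of at most `M - 1` translates of `S` and
has Lebesgue measure at most `(M - 1) · 2R`, while that of `g (x / (M - 1))` contains the centred
interval of that length. Among all sets of a given Lebesgue measure, the centred interval carries
the largest `ν`-mass because `p` is also even and nonincreasing in `|x|` (bathtub principle).
-/

open MeasureTheory Set
open scoped ENNReal

def SymmDecreasing (f : ℝ → ℝ) : Prop :=
  (∀ x, f (-x) = f x) ∧ AntitoneOn f (Ici 0)

namespace SymmDecreasing

variable {f : ℝ → ℝ}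

theorem apply_le_apply (hf : SymmDecreasing f) {x y : ℝ} (h : |x| ≤ |y|) : f y ≤ f x := by
  have h_abs : ∀ z, f |z| = f z := fun z => by
    rcases abs_choice z with hz | hz <;> rw [hz]
    exact hf.1 z
  rw [← h_abs x, ← h_abs y]
  exact hf.2 (abs_nonneg x) (abs_nonneg y) h

theorem apply_le_apply_zero (hf : SymmDecreasing f) (x : ℝ) : f x ≤ f 0 :=
  hf.apply_le_apply (by simp)

theorem ordConnected_superlevel (hf : SymmDecreasing f) (t : ℝ) : OrdConnected {x | t < f x} := by
  refine ⟨fun a ha b hb x hx => ?_⟩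
  have hx_abs : |x| ≤ max |a| |b| := abs_le_max_abs_abs hx.1 hx.2
  rcases le_total |a| |b| with hab | hab
  · exact hb.trans_le (hf.apply_le_apply (by rwa [max_eq_right hab] at hx_abs))
  · exact ha.trans_le (hf.apply_le_apply (by rwa [max_eq_left hab] at hx_abs))

protected theorem measurable (hf : SymmDecreasing f) : Measurable f :=
  measurable_of_Ioi fun t => (hf.ordConnected_superlevel t).measurableSet

theorem superlevel_eq_univ_or_sandwich (hf : SymmDecreasing f) (t : ℝ) :
    {x | t < f x} = univ ∨
      ∃ R, 0 ≤ R ∧ Ioo (-R) R ⊆ {x | t < f x} ∧ {x | t < f x} ⊆ Icc (-R) R := by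
  set S := {x | t < f x}
  -- `sSup ∅ = 0` in `ℝ`, so an empty superlevel set is covered by the choice `R = 0`.
  by_cases hbdd : BddAbove ((|·|) '' S)
  · refine Or.inr ⟨sSup ((|·|) '' S), Real.sSup_nonneg ?_, fun x hx => ?_,
      fun y hy => abs_le.mp (le_csSup hbdd ⟨y, hy, rfl⟩)⟩
    · rintro _ ⟨y, -, rfl⟩
      exact abs_nonneg y
    have hx_lt : |x| < sSup ((|·|) '' S) := abs_lt.mpr hx
    have hne : ((|·|) '' S).Nonempty := by
      by_contra hempty
      rw [not_nonempty_iff_eq_empty.mp hempty, Real.sSup_empty] at hx_lt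
      exact (abs_nonneg x).not_gt hx_lt
    obtain ⟨_, ⟨y, hy, rfl⟩, hxy⟩ := exists_lt_of_lt_csSup hne hx_lt
    exact hy.trans_le (hf.apply_le_apply hxy.le)
  · refine Or.inl (eq_univ_of_forall fun x => ?_)
    obtain ⟨_, ⟨y, hy, rfl⟩, hxy⟩ := not_bddAbove_iff.mp hbdd |x|
    exact hy.trans_le (hf.apply_le_apply hxy.le)

end SymmDecreasing

theorem setLIntegral_le_setLIntegral_of_measure_le {α : Type*} [MeasurableSpace α]
    {μ : Measure α} {f : α → ℝ≥0∞} {A B : Set α} (hA : MeasurableSet A) (hB : MeasurableSet B)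
    (hB_fin : μ B ≠ ∞) (hAB : μ A ≤ μ B) (s : ℝ≥0∞) (hf_out : ∀ x ∈ A \ B, f x ≤ s)
    (hf_in : ∀ x ∈ B \ A, s ≤ f x) :
    ∫⁻ x in A, f x ∂μ ≤ ∫⁻ x in B, f x ∂μ := by
  have h_diff : μ (A \ B) ≤ μ (B \ A) := by
    have h_fin : μ (A ∩ B) ≠ ∞ := ne_top_of_le_ne_top hB_fin (measure_mono inter_subset_right)
    rw [← ENNReal.add_le_add_iff_left h_fin, measure_inter_add_sdiff A hB, inter_comm,
      measure_inter_add_sdiff B hA]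
    exact hAB
  calc ∫⁻ x in A, f x ∂μ
      = (∫⁻ x in A ∩ B, f x ∂μ) + ∫⁻ x in A \ B, f x ∂μ := (lintegral_inter_add_sdiff _ A hB).symm
    _ ≤ (∫⁻ x in A ∩ B, f x ∂μ) + ∫⁻ x in B \ A, f x ∂μ := add_le_add le_rfl <|
        calc ∫⁻ x in A \ B, f x ∂μ
            ≤ ∫⁻ _ in A \ B, s ∂μ := setLIntegral_mono' (hA.diff hB) hf_out
          _ = s * μ (A \ B) := setLIntegral_const _ _
          _ ≤ s * μ (B \ A) := by gcongr
          _ = ∫⁻ _ in B \ A, s ∂μ := (setLIntegral_const _ _).symm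
          _ ≤ ∫⁻ x in B \ A, f x ∂μ := setLIntegral_mono' (hB.diff hA) hf_in
    _ = ∫⁻ x in B, f x ∂μ := by rw [inter_comm, lintegral_inter_add_sdiff _ B hA]

theorem SymmDecreasing.setLIntegral_le_setLIntegral_Ioo {p : ℝ → ℝ} (hp : SymmDecreasing p)
    {A : Set ℝ} (hA : MeasurableSet A) {c : ℝ} (hc : 0 ≤ c) (hAc : volume A ≤ volume (Ioo (-c) c)) :
    ∫⁻ x in A, ENNReal.ofReal (p x) ≤ ∫⁻ x in Ioo (-c) c, ENNReal.ofReal (p x) := by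
  refine setLIntegral_le_setLIntegral_of_measure_le hA measurableSet_Ioo measure_Ioo_lt_top.ne hAc
    (ENNReal.ofReal (p c)) (fun x hx => ?_) (fun x hx => ?_) <;> apply ENNReal.ofReal_le_ofReal
  · refine hp.apply_le_apply ?_
    rw [abs_of_nonneg hc]
    exact not_lt.mp fun h => hx.2 (abs_lt.mp h)
  · refine hp.apply_le_apply ?_
    rw [abs_of_nonneg hc]
    exact (abs_lt.mpr hx.1).le

theorem measure_biUnion_preimage_add_le {G ι : Type*} [MeasurableSpace G] [AddGroup G]
    [MeasurableAdd G] (μ : Measure G) [μ.IsAddRightInvariant] (Γ : Finset ι) (a : ι → G)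
    (S : Set G) : μ (⋃ γ ∈ Γ, (· + a γ) ⁻¹' S) ≤ Γ.card * μ S := by
  calc μ (⋃ γ ∈ Γ, (· + a γ) ⁻¹' S) ≤ ∑ γ ∈ Γ, μ ((· + a γ) ⁻¹' S) := measure_biUnion_finset_le _ _
    _ = Γ.card * μ S := by simp only [measure_preimage_add_right, Finset.sum_const, nsmul_eq_mul]

theorem SymmDecreasing.withDensity_superlevel_sup'_translates_le {g p : ℝ → ℝ}
    (hg : SymmDecreasing g) (hp : SymmDecreasing p) {m : ℝ} (hm : 0 < m) {Γ : Finset ℝ} (hΓ : Γ.Nonempty)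
    (hcard : (Γ.card : ℝ) ≤ m) (t : ℝ) :
    volume.withDensity (fun x => ENNReal.ofReal (p x)) {x | t < Γ.sup' hΓ fun γ => g (x - γ)}
      ≤ volume.withDensity (fun x => ENNReal.ofReal (p x)) {x | t < g (x / m)} := by
  set S := {y | t < g y}
  have h_union : {x | t < Γ.sup' hΓ fun γ => g (x - γ)} = ⋃ γ ∈ Γ, (· + -γ) ⁻¹' S := by
    ext x
    simp [S, Finset.lt_sup'_iff, sub_eq_add_neg]
  have h_dilate : {x | t < g (x / m)} = (· / m) ⁻¹' S := rfl
  rcases hg.superlevel_eq_univ_or_sandwich t with hS | ⟨R, hR, hRS, hSR⟩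
  · rw [h_dilate, show S = univ from hS, preimage_univ]
    exact measure_mono (subset_univ _)
  have h_meas : MeasurableSet (⋃ γ ∈ Γ, (· + -γ) ⁻¹' S) :=
    Γ.measurableSet_biUnion fun γ _ =>
      (hg.ordConnected_superlevel t).measurableSet.preimage (measurable_add_const _)
  have h_vol : volume (⋃ γ ∈ Γ, (· + -γ) ⁻¹' S) ≤ volume (Ioo (-(m * R)) (m * R)) :=
    calc volume (⋃ γ ∈ Γ, (· + -γ) ⁻¹' S)
        ≤ Γ.card * volume S := measure_biUnion_preimage_add_le _ _ _ _
      _ ≤ ENNReal.ofReal m * ENNReal.ofReal (2 * R) := by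
          gcongr
          · rw [← ENNReal.ofReal_natCast]
            exact ENNReal.ofReal_le_ofReal hcard
          · exact (measure_mono hSR).trans (by rw [Real.volume_Icc]; ring_nf; rfl)
      _ = volume (Ioo (-(m * R)) (m * R)) := by
          rw [← ENNReal.ofReal_mul hm.le, Real.volume_Ioo]
          ring_nf
  have h_Ioo : Ioo (-(m * R)) (m * R) ⊆ (· / m) ⁻¹' S := fun x hx => by
    refine hRS ⟨?_, ?_⟩
    · rw [lt_div_iff₀ hm]; linarith [hx.1]
    · rw [div_lt_iff₀ hm]; linarith [hx.2]
  rw [h_union, h_dilate, withDensity_apply _ h_meas]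
  calc ∫⁻ x in ⋃ γ ∈ Γ, (· + -γ) ⁻¹' S, ENNReal.ofReal (p x)
      ≤ ∫⁻ x in Ioo (-(m * R)) (m * R), ENNReal.ofReal (p x) :=
        hp.setLIntegral_le_setLIntegral_Ioo h_meas (mul_nonneg hm.le hR) h_vol
    _ = volume.withDensity (fun x => ENNReal.ofReal (p x)) (Ioo (-(m * R)) (m * R)) :=
        (withDensity_apply _ measurableSet_Ioo).symm
    _ ≤ _ := measure_mono h_Ioo

theorem integral_mul_le_integral_mul_of_withDensity_superlevel_le {α : Type*} [MeasurableSpace α]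
    {μ : Measure α} {f g p : α → ℝ} (hp : 0 ≤ p) (hp_meas : Measurable p) (hf : 0 ≤ f) (hg : 0 ≤ g)
    (hf_meas : Measurable f) (hg_meas : Measurable g) (hgp : Integrable (fun x => g x * p x) μ)
    (h : ∀ t, μ.withDensity (fun x => ENNReal.ofReal (p x)) {x | t < f x}
      ≤ μ.withDensity (fun x => ENNReal.ofReal (p x)) {x | t < g x}) :
    ∫ x, f x * p x ∂μ ≤ ∫ x, g x * p x ∂μ := by
  set ν := μ.withDensity (fun x => ENNReal.ofReal (p x))
  have h_layer : ∀ u : α → ℝ, 0 ≤ u → Measurable u →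
      ∫⁻ x, ENNReal.ofReal (u x * p x) ∂μ = ∫⁻ t in Ioi 0, ν {x | t < u x} :=
    fun u hu hu_meas => by
      rw [← lintegral_eq_lintegral_meas_lt ν (.of_forall hu) hu_meas.aemeasurable,
        lintegral_withDensity_eq_lintegral_mul _ hp_meas.ennreal_ofReal hu_meas.ennreal_ofReal]
      simp only [Pi.mul_apply, ← ENNReal.ofReal_mul (hp _), mul_comm]
  rw [integral_eq_lintegral_of_nonneg_ae (.of_forall fun x => mul_nonneg (hf x) (hp x))
      (hf_meas.mul hp_meas).aestronglyMeasurable,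
    integral_eq_lintegral_of_nonneg_ae (.of_forall fun x => mul_nonneg (hg x) (hp x))
      (hg_meas.mul hp_meas).aestronglyMeasurable]
  refine ENNReal.toReal_mono hgp.lintegral_lt_top.ne ?_
  rw [h_layer f hf hf_meas, h_layer g hg hg_meas]
  exact lintegral_mono fun t => h t

theorem max_translates_integral_le_general (M : ℕ) (g p : ℝ → ℝ)
    (hg_nonneg : ∀ x, 0 ≤ g x) (hg_even : ∀ x, g (-x) = g x)
    (hg_anti : AntitoneOn g (Set.Ici 0))
    (hp_nonneg : ∀ x, 0 ≤ p x) (hp_even : ∀ x, p (-x) = p x)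
    (hp_anti : AntitoneOn p (Set.Ici 0))
    (hp_int : Integrable p)
    (Γ : Finset ℝ) (hΓ : Γ.Nonempty) (hcard : Γ.card ≤ M - 1) :
    ∫ x : ℝ, (Γ.sup' hΓ fun γ => g (x - γ)) * p x
      ≤ ∫ x : ℝ, g (x / ((M : ℝ) - 1)) * p x := by
  have hg : SymmDecreasing g := ⟨hg_even, hg_anti⟩
  have hp : SymmDecreasing p := ⟨hp_even, hp_anti⟩
  have hcard_real : (Γ.card : ℝ) ≤ (M : ℝ) - 1 := by
    have := hΓ.card_pos
    rw [← Nat.cast_one, ← Nat.cast_sub (by omega)]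
    exact_mod_cast hcard
  have hM : 0 < (M : ℝ) - 1 := (Nat.cast_pos.mpr hΓ.card_pos).trans_le hcard_real
  have h_dilate_meas : Measurable fun x => g (x / ((M : ℝ) - 1)) :=
    hg.measurable.comp (measurable_div_const _)
  have h_sup_meas : Measurable fun x => Γ.sup' hΓ fun γ => g (x - γ) := by
    convert Finset.measurable_sup' hΓ (f := fun γ x => g (x - γ))
      fun γ _ => hg.measurable.comp (measurable_sub_const γ) using 1
    funext x
    rw [Finset.sup'_apply]
  refine integral_mul_le_integral_mul_of_withDensity_superlevel_le hp_nonneg hp.measurable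
    (fun x => (hg_nonneg _).trans (Finset.le_sup'_of_le _ hΓ.choose_spec le_rfl))
    (fun x => hg_nonneg _) h_sup_meas h_dilate_meas ?_
    (hg.withDensity_superlevel_sup'_translates_le hp hM hΓ hcard_real)
  refine hp_int.bdd_mul (c := g 0) h_dilate_meas.aestronglyMeasurable (.of_forall fun x => ?_)
  rw [Real.norm_of_nonneg (hg_nonneg _)]
  exact hg.apply_le_apply_zero _

/-- rearrangement inequality for translates of `g` against `p`. -/
theorem max_translates_integral_le (M : ℕ) (hM : 2 ≤ M) (g p : ℝ → ℝ)
    (hg_nonneg : ∀ x, 0 ≤ g x) (hg_even : ∀ x, g (-x) = g x)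
    (hg_anti : AntitoneOn g (Set.Ici 0))
    (hg_lip : ∃ K : NNReal, LipschitzWith K g)
    (hg_bdd : ∃ C : ℝ, ∀ x, g x ≤ C)
    (hp_nonneg : ∀ x, 0 ≤ p x) (hp_even : ∀ x, p (-x) = p x)
    (hp_anti : AntitoneOn p (Set.Ici 0))
    (hp_lip : ∃ K : NNReal, LipschitzWith K p)
    (hp_int : Integrable p)
    (Γ : Finset ℝ) (hΓ : Γ.Nonempty) (hcard : Γ.card ≤ M - 1) :
    ∫ x : ℝ, (Γ.sup' hΓ fun γ => g (x - γ)) * p x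
      ≤ ∫ x : ℝ, g (x / ((M : ℝ) - 1)) * p x :=
  max_translates_integral_le_general M g p hg_nonneg hg_even hg_anti hp_nonneg hp_even hp_anti
    hp_int Γ hΓ hcard
end

section
/- For every v > 0 and a > 0, ∫_ℝ g_a(x) · φ_v(x) dx = erf(a/√(2v)) + a·√(2/(πv))·exp(−a²/(2v)) − (a²/v)·erfc(a/√(2v)), where g_a(x) = min{1, a²/x²} for x ≠ 0 and g_a(0) = 1. -/
open Real

/-- The error function `erf`. -/
noncomputable def erf (x : ℝ) : ℝ := (2 / Real.sqrt π) * ∫ t in (0:ℝ)..x, Real.exp (-t ^ 2)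

/-- The complementary error function `erfc`. -/
noncomputable def erfc (x : ℝ) : ℝ := 1 - erf x

/-- Density of a centered real Gaussian with variance `v`. -/
noncomputable def gaussDensity (v x : ℝ) : ℝ :=
  (Real.sqrt (2 * π * v))⁻¹ * Real.exp (-x ^ 2 / (2 * v))

/-- The spread Markov-bound function `g_a(x) = min {1, a²/x²}` (with `g_a(0) = 1`). -/
noncomputable def gfun (a x : ℝ) : ℝ := if x = 0 then 1 else min 1 (a ^ 2 / x ^ 2)

open MeasureTheory Filter Set Topology

lemma hasDerivAt_erf (x : ℝ) : HasDerivAt erf (2 / Real.sqrt π * Real.exp (-x ^ 2)) x := by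
  have hc : Continuous fun t : ℝ => Real.exp (-t ^ 2) := by continuity
  have h := intervalIntegral.integral_hasDerivAt_right
    (hc.intervalIntegrable 0 x) (hc.stronglyMeasurableAtFilter _ _) hc.continuousAt
  exact h.const_mul (2 / Real.sqrt π)

lemma hasDerivAt_E (v : ℝ) (hv : 0 < v) (x : ℝ) :
    HasDerivAt (fun y => (1/2) * erf (y / Real.sqrt (2*v))) (gaussDensity v x) x := by
  have hs : (0:ℝ) < Real.sqrt (2*v) := Real.sqrt_pos.mpr (by linarith)
  have h1 : HasDerivAt (fun y : ℝ => y / Real.sqrt (2*v)) (1 / Real.sqrt (2*v)) x := by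
    simpa using (hasDerivAt_id x).div_const (Real.sqrt (2*v))
  have h := ((hasDerivAt_erf (x / Real.sqrt (2*v))).comp x h1).const_mul (1/2 : ℝ)
  refine h.congr_deriv (Eq.symm ?_)
  have hsq : Real.sqrt (2*v) ^ 2 = 2 * v := Real.sq_sqrt (by linarith)
  have harg : -(x / Real.sqrt (2*v)) ^ 2 = -x ^ 2 / (2*v) := by
    rw [div_pow, hsq]; ring
  rw [gaussDensity, harg]
  have hsp : Real.sqrt (2*π*v) = Real.sqrt π * Real.sqrt (2*v) := by
    rw [← Real.sqrt_mul pi_pos.le]; ring_nf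
  rw [hsp]
  have hπ : (0:ℝ) < Real.sqrt π := Real.sqrt_pos.mpr pi_pos
  field_simp

lemma hasDerivAt_gauss (v : ℝ) (hv : 0 < v) (x : ℝ) :
    HasDerivAt (gaussDensity v) (-(x/v) * gaussDensity v x) x := by
  have h1 : HasDerivAt (fun y : ℝ => -y ^ 2 / (2*v)) (-(2*x) / (2*v)) x := by
    simpa using ((hasDerivAt_pow 2 x).neg).div_const (2*v)
  have h2 := (h1.exp).const_mul (Real.sqrt (2*π*v))⁻¹
  refine h2.congr_deriv (Eq.symm ?_)
  rw [gaussDensity]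
  field_simp

lemma hasDerivAt_G (v a : ℝ) (hv : 0 < v) (x : ℝ) (hx : x ≠ 0) :
    HasDerivAt (fun y => -(a^2) * (gaussDensity v y / y)
        - (a^2/v) * ((1/2) * erf (y / Real.sqrt (2*v))))
      (a^2 * gaussDensity v x / x^2) x := by
  have h1 := (((hasDerivAt_gauss v hv x).div (hasDerivAt_id x) hx).const_mul (-(a^2))).sub
    ((hasDerivAt_E v hv x).const_mul (a^2/v))
  refine h1.congr_deriv (Eq.symm ?_)
  simp only [id]
  field_simp
  ring

lemma erf_tendsto_one : Tendsto erf atTop (𝓝 1) := by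
  have hint : IntegrableOn (fun t : ℝ => Real.exp (-t ^ 2)) (Ioi 0) := by
    have := (integrable_exp_neg_mul_sq (b := 1) one_pos).integrableOn (s := Ioi 0)
    simpa using this
  have h := intervalIntegral_tendsto_integral_Ioi 0 hint tendsto_id
  have hval : (∫ t in Ioi (0:ℝ), Real.exp (-t ^ 2)) = Real.sqrt π / 2 := by
    have := integral_gaussian_Ioi 1
    simpa using this
  rw [hval] at h
  have := h.const_mul (2 / Real.sqrt π)
  have hπ : Real.sqrt π ≠ 0 := ne_of_gt (Real.sqrt_pos.mpr pi_pos)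
  have heq : 2 / Real.sqrt π * (Real.sqrt π / 2) = 1 := by field_simp
  rw [heq] at this
  exact this

lemma gauss_tendsto_zero (v : ℝ) (hv : 0 < v) :
    Tendsto (gaussDensity v) atTop (𝓝 0) := by
  have h1 : Tendsto (fun x : ℝ => -x ^ 2 / (2*v)) atTop atBot := by
    apply Tendsto.atBot_div_const (by linarith)
    simpa using (tendsto_pow_atTop (two_ne_zero)).neg
  have h2 := (Real.tendsto_exp_atBot.comp h1).const_mul (Real.sqrt (2*π*v))⁻¹
  show Tendsto (fun x => (Real.sqrt (2*π*v))⁻¹ * Real.exp (-x ^ 2 / (2 * v))) atTop (𝓝 0)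
  simpa [gaussDensity, Function.comp] using h2

lemma integrable_gauss (v : ℝ) (hv : 0 < v) : Integrable (gaussDensity v) := by
  have h := (integrable_exp_neg_mul_sq (b := 1/(2*v)) (by positivity)).const_mul
    (Real.sqrt (2*π*v))⁻¹
  apply h.congr
  filter_upwards with x
  rw [gaussDensity]
  ring_nf

lemma tendsto_G (v a : ℝ) (hv : 0 < v) :
    Tendsto (fun y => -(a^2) * (gaussDensity v y / y)
        - (a^2/v) * ((1/2) * erf (y / Real.sqrt (2*v)))) atTop
      (𝓝 (-(a^2/(2*v)))) := by
  have hs : (0:ℝ) < Real.sqrt (2*v) := Real.sqrt_pos.mpr (by linarith)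
  have h1 : Tendsto (fun y : ℝ => gaussDensity v y / y) atTop (𝓝 0) := by
    have := (gauss_tendsto_zero v hv).mul tendsto_inv_atTop_zero
    simpa [div_eq_mul_inv] using this
  have h2 : Tendsto (fun y : ℝ => erf (y / Real.sqrt (2*v))) atTop (𝓝 1) :=
    erf_tendsto_one.comp (tendsto_id.atTop_div_const hs)
  have := ((h1.const_mul (-(a^2))).sub ((h2.const_mul (1/2:ℝ)).const_mul (a^2/v)))
  convert this using 2 <;> ring

lemma continuous_gauss (v : ℝ) : Continuous (gaussDensity v) := by
  apply continuous_const.mul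
  exact Real.continuous_exp.comp (by continuity)

lemma gauss_nonneg (v x : ℝ) : 0 ≤ gaussDensity v x := by
  unfold gaussDensity; positivity

lemma tail_integrable (v a : ℝ) (hv : 0 < v) (ha : 0 < a) :
    IntegrableOn (fun x => a^2 * gaussDensity v x / x^2) (Ioi a) := by
  apply Integrable.mono ((integrable_gauss v hv).integrableOn (s := Ioi a))
  · exact (((measurable_const.mul (continuous_gauss v).measurable).div
      (measurable_id.pow_const 2)).aestronglyMeasurable).restrict
  · rw [ae_restrict_iff' measurableSet_Ioi]
    filter_upwards with x hx
    have hxpos : 0 < x := lt_trans ha hx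
    have h1 : a^2 * gaussDensity v x / x^2 ≤ gaussDensity v x := by
      rw [div_le_iff₀ (by positivity)]
      have hx' : a < x := hx
      have : a^2 ≤ x^2 := by nlinarith
      nlinarith [gauss_nonneg v x]
    have h0 : 0 ≤ a^2 * gaussDensity v x / x^2 := by
      have := gauss_nonneg v x; positivity
    rw [Real.norm_eq_abs, Real.norm_eq_abs, abs_of_nonneg h0,
      abs_of_nonneg (gauss_nonneg v x)]
    exact h1

lemma tail_integral (v a : ℝ) (hv : 0 < v) (ha : 0 < a) :
    ∫ x in Ioi a, a^2 * gaussDensity v x / x^2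
      = -(a^2/(2*v)) + a * gaussDensity v a + (a^2/v) * ((1/2) * erf (a / Real.sqrt (2*v))) := by
  have h := integral_Ioi_of_hasDerivAt_of_tendsto'
    (f := fun y => -(a^2) * (gaussDensity v y / y) - (a^2/v) * ((1/2) * erf (y / Real.sqrt (2*v))))
    (f' := fun x => a^2 * gaussDensity v x / x^2)
    (fun x hx => hasDerivAt_G v a hv x (ne_of_gt (lt_of_lt_of_le ha hx)))
    (tail_integrable v a hv ha) (tendsto_G v a hv)
  rw [h]
  field_simp
  ring

lemma erf_neg (x : ℝ) : erf (-x) = - erf x := by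
  unfold erf
  have h : ∫ t in (0:ℝ)..(-x), Real.exp (-t ^ 2) = - ∫ t in (0:ℝ)..x, Real.exp (-t ^ 2) := by
    have h2 := intervalIntegral.integral_comp_neg (a := 0) (b := x)
      (fun t => Real.exp (-t ^ 2))
    have h3 : (fun t : ℝ => Real.exp (-(-t) ^ 2)) = fun t : ℝ => Real.exp (-t ^ 2) := by
      funext t; ring_nf
    rw [h3] at h2
    simp only [neg_zero] at h2
    rw [intervalIntegral.integral_symm, h2]
  rw [h]; ring


lemma gfun_even (a x : ℝ) : gfun a (-x) = gfun a x := by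
  unfold gfun
  simp [neg_eq_zero]

lemma gfun_nonneg (a x : ℝ) (ha : 0 < a) : 0 ≤ gfun a x := by
  unfold gfun
  split
  · norm_num
  · apply le_min zero_le_one (by positivity)


lemma gfun_le_one (a x : ℝ) : gfun a x ≤ 1 := by
  unfold gfun; split
  · exact le_refl 1
  · exact min_le_left _ _

lemma gfun_measurable (a : ℝ) : Measurable (gfun a) := by
  unfold gfun
  exact Measurable.ite (by simp [MeasurableSet.singleton]) measurable_const
    (measurable_const.min (measurable_const.div ((measurable_id.pow_const 2))))

lemma integrable_f (v a : ℝ) (hv : 0 < v) (ha : 0 < a) :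
    Integrable (fun x => gfun a x * gaussDensity v x) := by
  apply Integrable.mono (integrable_gauss v hv)
  · exact ((gfun_measurable a).mul (continuous_gauss v).measurable).aestronglyMeasurable
  · filter_upwards with x
    rw [Real.norm_eq_abs, Real.norm_eq_abs,
      abs_of_nonneg (mul_nonneg (gfun_nonneg a x ha) (gauss_nonneg v x)),
      abs_of_nonneg (gauss_nonneg v x)]
    nlinarith [gfun_le_one a x, gfun_nonneg a x ha, gauss_nonneg v x]

/-- Gaussian integral identity (equations (31)–(33) of the paper). -/
theorem integral_gfun_mul_gaussDensity (v a : ℝ) (hv : 0 < v) (ha : 0 < a) :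
    ∫ x : ℝ, gfun a x * gaussDensity v x
      = erf (a / Real.sqrt (2 * v))
        + a * Real.sqrt (2 / (π * v)) * Real.exp (-a ^ 2 / (2 * v))
        - (a ^ 2 / v) * erfc (a / Real.sqrt (2 * v)) := by
  set f := fun x => gfun a x * gaussDensity v x with hf
  have hint := integrable_f v a hv ha
  -- split
  have hsplit1 : (∫ x, f x) = (∫ x in Iic a, f x) + ∫ x in Ioi a, f x :=
    (intervalIntegral.integral_Iic_add_Ioi hint.integrableOn hint.integrableOn).symm
  have hsplit2 : (∫ x in Iic a, f x) = (∫ x in Iic (-a), f x) + ∫ x in (-a)..a, f x := by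
    have := intervalIntegral.integral_Iic_sub_Iic (a := -a) (b := a) (μ := volume)
      hint.integrableOn hint.integrableOn
    linarith
  -- middle
  have hmid : (∫ x in (-a)..a, f x) = erf (a / Real.sqrt (2*v)) := by
    have h1 : (∫ x in (-a)..a, f x) = ∫ x in (-a)..a, gaussDensity v x := by
      apply intervalIntegral.integral_congr
      intro x hx
      rw [Set.uIcc_of_le (by linarith)] at hx
      have hx2 : x^2 ≤ a^2 := sq_le_sq' hx.1 hx.2
      simp only [hf, gfun]
      split
      · ring
      · rename_i hx0
        rw [min_eq_left (by
          rw [le_div_iff₀ (by positivity)]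
          linarith)]
        ring
    rw [h1, intervalIntegral.integral_eq_sub_of_hasDerivAt
      (f := fun y => (1/2) * erf (y / Real.sqrt (2*v)))
      (fun x _ => hasDerivAt_E v hv x)
      ((continuous_gauss v).intervalIntegrable _ _)]
    rw [neg_div, erf_neg]
    ring
  -- right tail
  have hright : (∫ x in Ioi a, f x)
      = -(a^2/(2*v)) + a * gaussDensity v a + (a^2/v) * ((1/2) * erf (a / Real.sqrt (2*v))) := by
    rw [← tail_integral v a hv ha]
    apply setIntegral_congr_fun measurableSet_Ioi
    intro x hx
    have hxa : a < x := hx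
    have hx0 : x ≠ 0 := ne_of_gt (lt_trans ha hxa)
    simp only [hf, gfun, hx0, if_false]
    rw [min_eq_right (by
      rw [div_le_one (by positivity)]
      nlinarith)]
    ring
  -- left tail
  have hleft : (∫ x in Iic (-a), f x) = ∫ x in Ioi a, f x := by
    have heven : ∀ x, f (-x) = f x := by
      intro x
      simp only [hf, gfun_even]
      congr 1
      unfold gaussDensity
      ring_nf
    rw [show (∫ x in Iic (-a), f x) = ∫ x in Iic (-a), f (-x) from by simp [heven],
      integral_comp_neg_Iic, neg_neg]
  -- sqrt identity
  have hP : 2 * gaussDensity v a = Real.sqrt (2 / (π * v)) * Real.exp (-a^2 / (2*v)) := by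
    have h4 : Real.sqrt (2 / (π * v)) = 2 / Real.sqrt (2 * π * v) := by
      rw [show (2:ℝ) / (π * v) = 4 / (2 * π * v) by ring,
        Real.sqrt_div (by norm_num) _,
        show (4:ℝ) = 2^2 by norm_num, Real.sqrt_sq (by norm_num)]
    rw [h4, gaussDensity]
    have : Real.sqrt (2 * π * v) ≠ 0 := by
      refine ne_of_gt (Real.sqrt_pos.mpr ?_)
      positivity
    field_simp
  rw [hsplit1, hsplit2, hmid, hright, hleft, hright, erfc]
  linear_combination a * hP
end

section
/- For every real m ≥ 1 and every s ≥ 0, f̄(m, s) ≤ √(8/π) · (m − 1) · √s. -/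
open Real

/-- The bound `f̄(m, s)` from Theorem 2 of the paper. -/
noncomputable def fbar (m s : ℝ) : ℝ :=
  erf ((m - 1) * Real.sqrt s / Real.sqrt 2)
    + Real.sqrt (2 / π) * (m - 1) * Real.sqrt s * Real.exp (-((m - 1) ^ 2 * s) / 2)
    - (m - 1) ^ 2 * s * erfc ((m - 1) * Real.sqrt s / Real.sqrt 2)

lemma erf_le_lin {x : ℝ} (hx : 0 ≤ x) : erf x ≤ 2 / Real.sqrt π * x := by
  unfold erf
  have h1 : (∫ t in (0:ℝ)..x, Real.exp (-t ^ 2)) ≤ ∫ _t in (0:ℝ)..x, (1:ℝ) := by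
    apply intervalIntegral.integral_mono_on hx
    · exact (Continuous.intervalIntegrable (by continuity) _ _)
    · exact intervalIntegrable_const
    · intro t _
      simpa using Real.exp_le_one_iff.2 (neg_nonpos.2 (sq_nonneg t))
  have h2 : (∫ _t in (0:ℝ)..x, (1:ℝ)) = x := by simp
  have hc : (0:ℝ) ≤ 2 / Real.sqrt π := by positivity
  have := mul_le_mul_of_nonneg_left (h2 ▸ h1) hc
  linarith

lemma erf_le_one {x : ℝ} (hx : 0 ≤ x) : erf x ≤ 1 := by
  unfold erf
  have hint : MeasureTheory.IntegrableOn (fun t : ℝ => Real.exp (-t ^ 2)) (Set.Ioi 0) := by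
    have := (integrable_exp_neg_mul_sq (by norm_num : (0:ℝ) < 1)).integrableOn
      (s := Set.Ioi (0:ℝ))
    simpa [neg_mul, one_mul] using this
  have h1 : (∫ t in (0:ℝ)..x, Real.exp (-t ^ 2))
      ≤ ∫ t in Set.Ioi (0:ℝ), Real.exp (-t ^ 2) := by
    rw [intervalIntegral.integral_of_le hx]
    apply MeasureTheory.setIntegral_mono_set hint
    · filter_upwards with t using (Real.exp_pos _).le
    · exact HasSubset.Subset.eventuallyLE Set.Ioc_subset_Ioi_self
  have h2 : (∫ t in Set.Ioi (0:ℝ), Real.exp (-t ^ 2)) = Real.sqrt π / 2 := by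
    have := integral_gaussian_Ioi (1:ℝ)
    simpa [neg_mul, one_mul] using this
  rw [h2] at h1
  have hπ : (0:ℝ) < Real.sqrt π := Real.sqrt_pos.2 Real.pi_pos
  have hc : (0:ℝ) ≤ 2 / Real.sqrt π := by positivity
  calc 2 / Real.sqrt π * ∫ t in (0:ℝ)..x, Real.exp (-t ^ 2)
      ≤ 2 / Real.sqrt π * (Real.sqrt π / 2) := mul_le_mul_of_nonneg_left h1 hc
    _ = 1 := by field_simp

/-- Remark 1 of the paper: `f̄(m, s) ≤ √(8/π)·(m−1)·√s`. -/
theorem fbar_le_sqrt_eight_div_pi (m s : ℝ) (hm : 1 ≤ m) (hs : 0 ≤ s) :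
    fbar m s ≤ Real.sqrt (8 / π) * (m - 1) * Real.sqrt s := by
  set a := (m - 1) * Real.sqrt s with ha
  have ha0 : 0 ≤ a := mul_nonneg (by linarith) (Real.sqrt_nonneg s)
  have hx0 : 0 ≤ a / Real.sqrt 2 := div_nonneg ha0 (Real.sqrt_nonneg 2)
  have hπ : (0:ℝ) < π := Real.pi_pos
  have h2 : (0:ℝ) < Real.sqrt 2 := Real.sqrt_pos.2 (by norm_num)
  -- erf bound: erf(a/√2) ≤ √(2/π) * a
  have herf : erf (a / Real.sqrt 2) ≤ Real.sqrt (2 / π) * a := by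
    have := erf_le_lin hx0
    have heq : 2 / Real.sqrt π * (a / Real.sqrt 2) = Real.sqrt (2 / π) * a := by
      have hsq2 : Real.sqrt 2 * Real.sqrt 2 = 2 := Real.mul_self_sqrt (by norm_num)
      have hπ' : (0:ℝ) < Real.sqrt π := Real.sqrt_pos.2 hπ
      rw [show Real.sqrt (2 / π) = Real.sqrt 2 / Real.sqrt π from
        Real.sqrt_div (by norm_num) π]
      field_simp
      linear_combination (-a) * hsq2
    linarith [this, heq.ge, heq.le]
  -- exponential term: √(2/π) * a * exp(...) ≤ √(2/π) * a
  have hexp : Real.sqrt (2 / π) * (m - 1) * Real.sqrt s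
      * Real.exp (-((m - 1) ^ 2 * s) / 2) ≤ Real.sqrt (2 / π) * a := by
    have h1 : Real.exp (-((m - 1) ^ 2 * s) / 2) ≤ 1 :=
      Real.exp_le_one_iff.2 (by nlinarith [sq_nonneg (m - 1)])
    have h2' : Real.sqrt (2 / π) * (m - 1) * Real.sqrt s = Real.sqrt (2 / π) * a := by
      rw [ha]; ring
    rw [← h2']
    have hnn : 0 ≤ Real.sqrt (2 / π) * (m - 1) * Real.sqrt s := by
      apply mul_nonneg (mul_nonneg (Real.sqrt_nonneg _) (by linarith)) (Real.sqrt_nonneg _)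
    nlinarith
  -- erfc term nonneg
  have herfc : 0 ≤ erfc (a / Real.sqrt 2) := by
    have := erf_le_one hx0
    unfold erfc; linarith
  have hterm : 0 ≤ (m - 1) ^ 2 * s * erfc (a / Real.sqrt 2) := by
    apply mul_nonneg (mul_nonneg (sq_nonneg _) hs) herfc
  -- combine
  have hrhs : Real.sqrt (8 / π) * (m - 1) * Real.sqrt s = 2 * (Real.sqrt (2 / π) * a) := by
    rw [ha, show (8:ℝ) / π = 4 * (2 / π) by ring,
      Real.sqrt_mul (by norm_num : (0:ℝ) ≤ 4),
      show Real.sqrt 4 = 2 by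
        rw [show (4:ℝ) = 2 ^ 2 by norm_num, Real.sqrt_sq (by norm_num : (0:ℝ) ≤ 2)]]
    ring
  unfold fbar
  rw [hrhs]
  have : (m - 1) * Real.sqrt s / Real.sqrt 2 = a / Real.sqrt 2 := by rw [ha]
  rw [this]
  linarith
end

section
/- Let M : (0, ∞) → ℝ be a function with M(ρ) ≥ 2 for all ρ > 0, and suppose there exists ε > 0 such that lim_{ρ → ∞} M(ρ)·ρ^{ε − 1/2} = 0. Then for every C > 0, lim_{ρ → ∞} [ H̄_b(f̄(M(ρ), C/ρ)) + f̄(M(ρ), C/ρ)·log₂(M(ρ) − 1) ] = 0. -/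
open Real Filter

lemma erf_nonneg {y : ℝ} (hy : 0 ≤ y) : 0 ≤ erf y := by
  unfold erf
  apply mul_nonneg (by positivity)
  apply intervalIntegral.integral_nonneg hy
  intro t _; positivity

lemma erf_le {y : ℝ} (hy : 0 ≤ y) : erf y ≤ 2 / Real.sqrt π * y := by
  unfold erf
  have h1 : (∫ t in (0:ℝ)..y, Real.exp (-t ^ 2)) ≤ ∫ _t in (0:ℝ)..y, (1:ℝ) := by
    apply intervalIntegral.integral_mono_on hy
    · exact (Continuous.intervalIntegrable (by continuity) _ _)
    · exact intervalIntegrable_const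
    · intro t _; exact Real.exp_le_one_iff.mpr (neg_nonpos.mpr (sq_nonneg t))
  have h2 : (∫ _t in (0:ℝ)..y, (1:ℝ)) = y := by simp
  have h3 : (0:ℝ) ≤ 2 / Real.sqrt π := by positivity
  nlinarith [h1, h2]

lemma fbar_abs_le {m s : ℝ} (hm : 1 ≤ m) (hs : 0 ≤ s)
    (hx1 : (m - 1) * Real.sqrt s ≤ 1) :
    |fbar m s| ≤ 3 * ((m - 1) * Real.sqrt s) := by
  have hsq : (m - 1) ^ 2 * s = ((m - 1) * Real.sqrt s) ^ 2 := by
    rw [mul_pow, Real.sq_sqrt hs]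
  unfold fbar
  rw [hsq, mul_assoc (Real.sqrt (2 / π))]
  set x := (m - 1) * Real.sqrt s with hxdef
  have hx0 : 0 ≤ x := mul_nonneg (by linarith) (Real.sqrt_nonneg s)
  have hy0 : 0 ≤ x / Real.sqrt 2 := by positivity
  have hs2 : Real.sqrt π * Real.sqrt 2 ≥ 2 := by
    rw [← Real.sqrt_mul Real.pi_pos.le 2]
    exact Real.le_sqrt_of_sq_le (by nlinarith [Real.pi_gt_three])
  have hsπ : 0 < Real.sqrt π := Real.sqrt_pos.mpr Real.pi_pos
  have hs2' : (0:ℝ) < Real.sqrt 2 := Real.sqrt_pos.mpr (by norm_num)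
  have herf0 : 0 ≤ erf (x / Real.sqrt 2) := erf_nonneg hy0
  have herfx : erf (x / Real.sqrt 2) ≤ x := by
    have h := erf_le hy0
    have : 2 / Real.sqrt π * (x / Real.sqrt 2) ≤ x := by
      rw [div_mul_div_comm, div_le_iff₀ (by positivity)]
      nlinarith
    linarith
  have herf1 : erf (x / Real.sqrt 2) ≤ 1 := herfx.trans hx1
  have herfc0 : 0 ≤ erfc (x / Real.sqrt 2) := by unfold erfc; linarith
  have herfc1 : erfc (x / Real.sqrt 2) ≤ 1 := by unfold erfc; linarith
  have hexp : Real.exp (-x ^ 2 / 2) ≤ 1 :=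
    Real.exp_le_one_iff.mpr (by nlinarith [sq_nonneg x])
  have hexp0 : 0 < Real.exp (-x ^ 2 / 2) := Real.exp_pos _
  have hsq1 : Real.sqrt (2 / π) ≤ 1 := by
    rw [show (1:ℝ) = Real.sqrt 1 by simp]
    exact Real.sqrt_le_sqrt (by rw [div_le_one Real.pi_pos]; nlinarith [Real.pi_gt_three])
  have hsq0 : 0 ≤ Real.sqrt (2 / π) := Real.sqrt_nonneg _
  have hb0 : 0 ≤ Real.sqrt (2 / π) * (x * Real.exp (-x ^ 2 / 2)) := by positivity
  have hxe : x * Real.exp (-x ^ 2 / 2) ≤ x := mul_le_of_le_one_right hx0 hexp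
  have hb1 : Real.sqrt (2 / π) * (x * Real.exp (-x ^ 2 / 2)) ≤ x := by
    calc Real.sqrt (2 / π) * (x * Real.exp (-x ^ 2 / 2))
        ≤ 1 * (x * Real.exp (-x ^ 2 / 2)) :=
          mul_le_mul_of_nonneg_right hsq1 (by positivity)
      _ = x * Real.exp (-x ^ 2 / 2) := one_mul _
      _ ≤ x := hxe
  have hc0 : 0 ≤ x ^ 2 * erfc (x / Real.sqrt 2) := by positivity
  have hc1 : x ^ 2 * erfc (x / Real.sqrt 2) ≤ x := by nlinarith
  rw [abs_le]
  constructor <;> linarith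

/-- The binary entropy function (base-2 logarithm). -/
noncomputable def binEnt (x : ℝ) : ℝ := -x * Real.logb 2 x - (1 - x) * Real.logb 2 (1 - x)

/-- `H̄_b(x) = H_b(min {x, 1/2})`. -/
noncomputable def binEntBar (x : ℝ) : ℝ := binEnt (min x (1 / 2))


lemma continuous_binEnt : Continuous binEnt := by
  have h : binEnt = fun x =>
      (-(x * Real.log x) - ((1 - x) * Real.log (1 - x))) / Real.log 2 := by
    funext x
    unfold binEnt Real.logb
    ring
  rw [h]
  exact ((Real.continuous_mul_log.neg).sub
    (Real.continuous_mul_log.comp (continuous_const.sub continuous_id))).div_const _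

lemma continuous_binEntBar : Continuous binEntBar :=
  continuous_binEnt.comp (continuous_id.min continuous_const)

lemma binEntBar_zero : binEntBar 0 = 0 := by
  unfold binEntBar binEnt
  norm_num

lemma sqrt_div_rpow {C ρ : ℝ} (hC : 0 ≤ C) (hρ : 0 < ρ) :
    Real.sqrt (C / ρ) = Real.sqrt C * ρ ^ (-(1/2) : ℝ) := by
  rw [Real.sqrt_div hC ρ, Real.sqrt_eq_rpow ρ, Real.rpow_neg hρ.le, div_eq_mul_inv]

/-- Proposition 2 of the paper: if the number of quantization levels `M(ρ)` grows
strictly slower than `√ρ` (in the sense `M ≺ √ρ`), then the per-ADC mutual-information bound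
tends to zero as the jammer power `ρ` tends to infinity. -/
theorem tendsto_bound_zero_of_slow_resolution_growth (M : ℝ → ℝ)
    (hM : ∀ ρ : ℝ, 0 < ρ → 2 ≤ M ρ)
    (hgrowth : ∃ ε : ℝ, 0 < ε ∧
      Tendsto (fun ρ : ℝ => M ρ * ρ ^ (ε - 1 / 2 : ℝ)) atTop (nhds 0)) :
    ∀ C : ℝ, 0 < C →
      Tendsto
        (fun ρ : ℝ =>
          binEntBar (fbar (M ρ) (C / ρ)) + fbar (M ρ) (C / ρ) * Real.logb 2 (M ρ - 1))
        atTop (nhds 0) := by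
  obtain ⟨ε, hε, htend⟩ := hgrowth
  intro C hC
  set X : ℝ → ℝ := fun ρ => (M ρ - 1) * Real.sqrt (C / ρ) with hXdef
  have hev1 : ∀ᶠ ρ : ℝ in atTop, (1:ℝ) ≤ ρ := eventually_ge_atTop 1
  have hXpos : ∀ᶠ ρ : ℝ in atTop, 0 ≤ X ρ := by
    filter_upwards [eventually_gt_atTop 0] with ρ hρ
    exact mul_nonneg (by linarith [hM ρ hρ]) (Real.sqrt_nonneg _)
  have hXle : ∀ᶠ ρ : ℝ in atTop,
      X ρ ≤ Real.sqrt C * (M ρ * ρ ^ (ε - 1/2 : ℝ)) := by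
    filter_upwards [hev1] with ρ hρ
    have hρ0 : (0:ℝ) < ρ := lt_of_lt_of_le one_pos hρ
    have hM2 := hM ρ hρ0
    have hr : ρ ^ (-(1/2) : ℝ) ≤ ρ ^ (ε - 1/2 : ℝ) :=
      Real.rpow_le_rpow_of_exponent_le hρ (by linarith)
    have hr0 : (0:ℝ) ≤ ρ ^ (-(1/2) : ℝ) := (Real.rpow_pos_of_pos hρ0 _).le
    have hC0 : (0:ℝ) ≤ Real.sqrt C := Real.sqrt_nonneg C
    calc X ρ = (M ρ - 1) * (Real.sqrt C * ρ ^ (-(1/2) : ℝ)) := by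
          rw [hXdef]; simp only []; rw [sqrt_div_rpow hC.le hρ0]
      _ ≤ Real.sqrt C * (M ρ * ρ ^ (ε - 1/2 : ℝ)) := by
          nlinarith [mul_nonneg (mul_nonneg (by linarith : (0:ℝ) ≤ M ρ - 1) hC0)
              (sub_nonneg.mpr hr),
            mul_nonneg hC0 (hr0.trans hr)]
  have hgt : Tendsto (fun ρ : ℝ => Real.sqrt C * (M ρ * ρ ^ (ε - 1/2 : ℝ)))
      atTop (nhds 0) := by
    simpa using htend.const_mul (Real.sqrt C)
  have hXtend : Tendsto X atTop (nhds 0) := squeeze_zero' hXpos hXle hgt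
  have hXsmall : ∀ᶠ ρ : ℝ in atTop, X ρ ≤ 1 :=
    (hXtend.eventually_lt_const one_pos).mono fun _ h => h.le
  have hfb : ∀ᶠ ρ : ℝ in atTop, |fbar (M ρ) (C / ρ)| ≤ 3 * X ρ := by
    filter_upwards [eventually_gt_atTop 0, hXsmall] with ρ hρ hx
    exact fbar_abs_le (by linarith [hM ρ hρ]) (div_nonneg hC.le hρ.le) hx
  have hfbtend : Tendsto (fun ρ : ℝ => fbar (M ρ) (C / ρ)) atTop (nhds 0) := by
    apply squeeze_zero_norm' (a := fun ρ => 3 * X ρ)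
    · simpa [Real.norm_eq_abs] using hfb
    · simpa using hXtend.const_mul (3:ℝ)
  have hA : Tendsto (fun ρ : ℝ => binEntBar (fbar (M ρ) (C / ρ))) atTop (nhds 0) := by
    have := (continuous_binEntBar.tendsto 0).comp hfbtend
    simpa [binEntBar_zero, Function.comp_def] using this
  have hlog := (isLittleO_log_rpow_atTop hε).tendsto_div_nhds_zero
  have hevM : ∀ᶠ ρ : ℝ in atTop, M ρ * ρ ^ (ε - 1/2 : ℝ) ≤ 1 :=
    (htend.eventually_lt_const one_pos).mono fun _ h => h.le
  have hD : Tendsto (fun ρ : ℝ => fbar (M ρ) (C / ρ) * Real.logb 2 (M ρ - 1))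
      atTop (nhds 0) := by
    apply squeeze_zero_norm'
      (a := fun ρ : ℝ => (3 * Real.sqrt C * (1/2) / Real.log 2) * (Real.log ρ / ρ ^ (ε:ℝ)))
    · filter_upwards [hev1, hevM, hXsmall, hfb] with ρ hρ hMb hx hfabs
      have hρ0 : (0:ℝ) < ρ := lt_of_lt_of_le one_pos hρ
      have hM2 := hM ρ hρ0
      have hrpos : (0:ℝ) < ρ ^ (ε - 1/2 : ℝ) := Real.rpow_pos_of_pos hρ0 _
      have hMle : M ρ ≤ ρ ^ ((1/2:ℝ) - ε) := by
        have h1 : M ρ ≤ 1 / ρ ^ (ε - 1/2 : ℝ) := (le_div_iff₀ hrpos).mpr hMb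
        have h2 : 1 / ρ ^ (ε - 1/2 : ℝ) = ρ ^ ((1/2:ℝ) - ε) := by
          rw [one_div, ← Real.rpow_neg hρ0.le]
          congr 1; ring
        linarith [h2 ▸ h1]
      have hmulr : ρ ^ ((1/2:ℝ) - ε) * ρ ^ (-(1/2) : ℝ) = ρ ^ (-ε : ℝ) := by
        rw [← Real.rpow_add hρ0]; congr 1; ring
      have hXle2 : X ρ ≤ Real.sqrt C * ρ ^ (-ε : ℝ) := by
        calc X ρ = (M ρ - 1) * Real.sqrt (C / ρ) := rfl
          _ ≤ ρ ^ ((1/2:ℝ) - ε) * Real.sqrt (C / ρ) :=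
              mul_le_mul_of_nonneg_right (by linarith) (Real.sqrt_nonneg _)
          _ = Real.sqrt C * (ρ ^ ((1/2:ℝ) - ε) * ρ ^ (-(1/2) : ℝ)) := by
              rw [sqrt_div_rpow hC.le hρ0]; ring
          _ = Real.sqrt C * ρ ^ (-ε : ℝ) := by rw [hmulr]
      have hlρ : 0 ≤ Real.logb 2 ρ := Real.logb_nonneg (by norm_num) hρ
      have hlogb : Real.logb 2 (M ρ - 1) ≤ (1/2) * Real.logb 2 ρ := by
        have hl1 : Real.logb 2 (M ρ - 1) ≤ Real.logb 2 (M ρ) :=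
          Real.logb_le_logb_of_le (by norm_num) (by linarith) (by linarith)
        have hl2 : Real.logb 2 (M ρ) ≤ Real.logb 2 (ρ ^ ((1/2:ℝ) - ε)) :=
          Real.logb_le_logb_of_le (by norm_num) (by linarith) hMle
        have hl3 : Real.logb 2 (ρ ^ ((1/2:ℝ) - ε)) = ((1/2:ℝ) - ε) * Real.logb 2 ρ := by
          unfold Real.logb
          rw [Real.log_rpow hρ0]; ring
        have hεl := mul_nonneg hε.le hlρ
        rw [hl3] at hl2
        nlinarith
      have hlogb0 : 0 ≤ Real.logb 2 (M ρ - 1) :=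
        Real.logb_nonneg (by norm_num) (by linarith)
      have hXρ0 : 0 ≤ X ρ := mul_nonneg (by linarith) (Real.sqrt_nonneg _)
      have hC0 : (0:ℝ) ≤ Real.sqrt C := Real.sqrt_nonneg C
      have h2ne : Real.log 2 ≠ 0 := (Real.log_pos one_lt_two).ne'
      have hρε : ρ ^ (ε:ℝ) ≠ 0 := (Real.rpow_pos_of_pos hρ0 ε).ne'
      calc ‖fbar (M ρ) (C / ρ) * Real.logb 2 (M ρ - 1)‖
          = |fbar (M ρ) (C / ρ)| * Real.logb 2 (M ρ - 1) := by
            rw [Real.norm_eq_abs, abs_mul, abs_of_nonneg hlogb0]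
        _ ≤ (3 * X ρ) * ((1/2) * Real.logb 2 ρ) :=
            mul_le_mul hfabs hlogb hlogb0 (by linarith)
        _ ≤ (3 * (Real.sqrt C * ρ ^ (-ε : ℝ))) * ((1/2) * Real.logb 2 ρ) := by
            have : 0 ≤ (1/2) * Real.logb 2 ρ := by linarith
            apply mul_le_mul_of_nonneg_right _ this
            linarith
        _ = (3 * Real.sqrt C * (1/2) / Real.log 2) * (Real.log ρ / ρ ^ (ε:ℝ)) := by
            rw [Real.rpow_neg hρ0.le]
            unfold Real.logb
            ring
    · simpa using hlog.const_mul (3 * Real.sqrt C * (1/2) / Real.log 2)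
  simpa using hA.add hD
end

section
/- Let (Ω, P) be a probability space, let v > 0, R > 0, and let M ≥ 2 be an integer. Let Γ ⊆ ℝ be a nonempty finite set with |Γ| ≤ M − 1, let α be a type, and let Q : ℝ → α satisfy: for all reals x ≤ y, if no γ ∈ Γ satisfies x < γ ≤ y, then Q(x) = Q(y). Let d and r be independent real-valued random variables such that d has the Gaussian distribution with mean 0 and variance v and r is square-integrable with E[r²] ≤ R. Then P({ω : Q(d(ω) + r(ω)) ≠ Q(d(ω))}) ≤ f̄(M, R/v). -/
open Real MeasureTheory ProbabilityTheory
open scoped ENNReal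

lemma intInt_exp (a b : ℝ) : IntervalIntegrable (fun t : ℝ => Real.exp (-t^2)) volume a b :=
  (Real.continuous_exp.comp (continuous_neg.comp (continuous_pow 2))).intervalIntegrable a b

lemma integral_exp_sq_le {a b : ℝ} (ha : 0 ≤ a) (hab : a ≤ b) :
    (∫ t in a..b, Real.exp (-t^2)) ≤ Real.exp (-a^2) * (b - a) := by
  have h := intervalIntegral.integral_mono_on hab (intInt_exp a b)
    (intervalIntegrable_const (c := Real.exp (-a^2)))
    (fun x hx => by
      apply Real.exp_le_exp.mpr
      have h1 : a ≤ x := hx.1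
      nlinarith [hx.2])
  simpa [mul_comm] using h

lemma le_integral_exp_sq {a b : ℝ} (ha : 0 ≤ a) (hab : a ≤ b) :
    Real.exp (-b^2) * (b - a) ≤ ∫ t in a..b, Real.exp (-t^2) := by
  have h := intervalIntegral.integral_mono_on hab
    (intervalIntegrable_const (c := Real.exp (-b^2))) (intInt_exp a b)
    (fun x hx => by
      apply Real.exp_le_exp.mpr
      have h1 : 0 ≤ x := ha.trans hx.1
      nlinarith [hx.2])
  simpa [mul_comm] using h

lemma erf_nonneg_s17 {x : ℝ} (hx : 0 ≤ x) : 0 ≤ erf x := by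
  unfold erf
  apply mul_nonneg (by positivity)
  apply intervalIntegral.integral_nonneg hx
  intro u _; positivity

lemma erf_mono {x y : ℝ} (hx : 0 ≤ x) (hxy : x ≤ y) : erf x ≤ erf y := by
  unfold erf
  apply mul_le_mul_of_nonneg_left _ (by positivity)
  rw [← intervalIntegral.integral_add_adjacent_intervals (intInt_exp 0 x) (intInt_exp x y)]
  have : 0 ≤ ∫ t in x..y, Real.exp (-t^2) :=
    intervalIntegral.integral_nonneg hxy (fun u _ => by positivity)
  linarith

lemma erf_tangent {c Rr : ℝ} (hc : 0 < c) (hR : 0 < Rr) (t : ℝ) :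
    erf (c * |t|) ≤ erf (c * Real.sqrt Rr)
      + c * Real.exp (-(c * Real.sqrt Rr)^2) / (Real.sqrt π * Real.sqrt Rr) * (t^2 - Rr) := by
  set s := Real.sqrt Rr with hsdef
  have hs : 0 < s := Real.sqrt_pos.mpr hR
  have hs2 : s^2 = Rr := Real.sq_sqrt hR.le
  have ht2 : |t|^2 = t^2 := sq_abs t
  have hp : (0:ℝ) < Real.sqrt π := Real.sqrt_pos.mpr Real.pi_pos
  set E := Real.exp (-(c*s)^2) with hEdef
  have hE : 0 < E := Real.exp_pos _
  rcases le_or_gt s |t| with h | h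
  · have key : erf (c * |t|) = erf (c * s) + (2 / Real.sqrt π) * ∫ u in (c*s)..(c*|t|), Real.exp (-u^2) := by
      unfold erf
      rw [← intervalIntegral.integral_add_adjacent_intervals (intInt_exp 0 (c*s)) (intInt_exp (c*s) (c*|t|))]
      ring
    have hb := integral_exp_sq_le (a := c*s) (b := c*|t|) (by positivity)
      (by nlinarith)
    rw [key]
    have h2 : (2 / Real.sqrt π) * (E * (c*|t| - c*s)) ≤ c * E / (Real.sqrt π * s) * (|t|^2 - s^2) := by
      rw [div_mul_eq_mul_div, div_mul_eq_mul_div, div_le_div_iff₀ (by positivity) (by positivity)]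
      nlinarith [mul_nonneg (mul_nonneg (mul_nonneg hc.le hE.le) hp.le) (sq_nonneg (|t| - s))]
    calc erf (c*s) + (2 / Real.sqrt π) * ∫ u in (c*s)..(c*|t|), Real.exp (-u^2)
        ≤ erf (c*s) + (2 / Real.sqrt π) * (E * (c*|t| - c*s)) := by
          have : (0:ℝ) ≤ 2 / Real.sqrt π := by positivity
          nlinarith [hb]
      _ ≤ _ := by
          have e1 : |t|^2 - s^2 = t^2 - Rr := by rw [ht2, hs2]
          rw [e1] at h2; linarith
  · have key : erf (c * s) = erf (c * |t|) + (2 / Real.sqrt π) * ∫ u in (c*|t|)..(c*s), Real.exp (-u^2) := by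
      unfold erf
      rw [← intervalIntegral.integral_add_adjacent_intervals (intInt_exp 0 (c*|t|)) (intInt_exp (c*|t|) (c*s))]
      ring
    have hb := le_integral_exp_sq (a := c*|t|) (b := c*s) (by positivity)
      (by nlinarith [abs_nonneg t])
    have h2 : c * E / (Real.sqrt π * s) * (s^2 - |t|^2) ≤ (2 / Real.sqrt π) * (E * (c*s - c*|t|)) := by
      rw [div_mul_eq_mul_div, div_mul_eq_mul_div, div_le_div_iff₀ (by positivity) (by positivity)]
      nlinarith [mul_nonneg (mul_nonneg (mul_nonneg hc.le hE.le) hp.le) (sq_nonneg (|t| - s))]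
    have h3 : (2 / Real.sqrt π) * (E * (c*s - c*|t|)) ≤ (2 / Real.sqrt π) * ∫ u in (c*|t|)..(c*s), Real.exp (-u^2) := by
      have : (0:ℝ) ≤ 2 / Real.sqrt π := by positivity
      nlinarith [hb]
    have e1 : s^2 - |t|^2 = Rr - t^2 := by rw [ht2, hs2]
    rw [e1] at h2
    nlinarith [key]

lemma integrableOn_exp_sq_Ioi (x : ℝ) : IntegrableOn (fun u : ℝ => Real.exp (-u^2)) (Set.Ioi x) := by
  have := integrable_exp_neg_mul_sq (b := 1) one_pos
  simpa using this.integrableOn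

lemma erfc_eq_Ioi {x : ℝ} (hx : 0 ≤ x) :
    erfc x = (2 / Real.sqrt π) * ∫ u in Set.Ioi x, Real.exp (-u^2) := by
  have hp : (0:ℝ) < Real.sqrt π := Real.sqrt_pos.mpr Real.pi_pos
  have h1 : ∫ u in Set.Ioi (0:ℝ), Real.exp (-u^2) = Real.sqrt π / 2 := by
    have := integral_gaussian_Ioi 1
    simpa using this
  have hsplit : (∫ u in Set.Ioc 0 x, Real.exp (-u^2)) + ∫ u in Set.Ioi x, Real.exp (-u^2)
      = ∫ u in Set.Ioi (0:ℝ), Real.exp (-u^2) := by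
    rw [← setIntegral_union (Set.Ioc_disjoint_Ioi le_rfl) measurableSet_Ioi
      ((integrableOn_exp_sq_Ioi 0).mono_set Set.Ioc_subset_Ioi_self) (integrableOn_exp_sq_Ioi x),
      Set.Ioc_union_Ioi_eq_Ioi hx]
  have herf : erf x = (2 / Real.sqrt π) * ∫ u in Set.Ioc 0 x, Real.exp (-u^2) := by
    unfold erf
    rw [intervalIntegral.integral_of_le hx]
  have hone : (2 / Real.sqrt π) * ∫ u in Set.Ioi (0:ℝ), Real.exp (-u^2) = 1 := by
    rw [h1]; field_simp
  unfold erfc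
  rw [← hone, herf, ← hsplit]
  ring

lemma integral_Ioi_mul_exp {x : ℝ} :
    ∫ u in Set.Ioi x, u * Real.exp (-u^2) = Real.exp (-x^2) / 2 := by
  have hderiv : ∀ u ∈ Set.Ioi x, HasDerivAt (fun u : ℝ => -(Real.exp (-u^2) / 2))
      (u * Real.exp (-u^2)) u := by
    intro u _
    have h1 : HasDerivAt (fun u : ℝ => -u^2) (-(2*u)) u := by
      simpa using ((hasDerivAt_pow 2 u).fun_neg)
    have h2 := (h1.exp.div_const 2).fun_neg
    refine h2.congr_deriv ?_
    ring
  have hint : IntegrableOn (fun u : ℝ => u * Real.exp (-u^2)) (Set.Ioi x) := by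
    have := integrable_mul_exp_neg_mul_sq (b := 1) one_pos
    simpa using this.integrableOn
  have htend : Filter.Tendsto (fun u : ℝ => -(Real.exp (-u^2) / 2)) Filter.atTop (nhds 0) := by
    have h1 : Filter.Tendsto (fun u : ℝ => -u^2) Filter.atTop Filter.atBot := by
      have h0 : Filter.Tendsto (fun u : ℝ => u^2) Filter.atTop Filter.atTop :=
        Filter.tendsto_pow_atTop two_ne_zero
      exact Filter.tendsto_neg_atTop_atBot.comp h0
    have h2 := (Real.tendsto_exp_atBot.comp h1).neg.div_const 2
    have h3 : (fun u : ℝ => -(Real.exp (-u^2) / 2)) = fun a : ℝ => -(Real.exp ∘ fun u : ℝ => -u^2) a / 2 := by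
      ext u; simp [Function.comp]; ring
    rw [h3]
    simpa using h2
  have hcont : ContinuousWithinAt (fun u : ℝ => -(Real.exp (-u^2) / 2)) (Set.Ici x) x :=
    (((Real.continuous_exp.comp (continuous_neg.comp (continuous_pow 2))).div_const 2).neg).continuousWithinAt
  rw [MeasureTheory.integral_Ioi_of_hasDerivAt_of_tendsto hcont hderiv hint htend]
  ring

lemma erfc_le {x : ℝ} (hx : 0 < x) : erfc x ≤ Real.exp (-x^2) / (x * Real.sqrt π) := by
  have hp : (0:ℝ) < Real.sqrt π := Real.sqrt_pos.mpr Real.pi_pos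
  rw [erfc_eq_Ioi hx.le]
  have hmono : (∫ u in Set.Ioi x, Real.exp (-u^2)) ≤ ∫ u in Set.Ioi x, (u/x) * Real.exp (-u^2) := by
    apply setIntegral_mono_on (integrableOn_exp_sq_Ioi x)
    · have := integrable_mul_exp_neg_mul_sq (b := 1) one_pos
      have h2 : IntegrableOn (fun u : ℝ => u * Real.exp (-u^2)) (Set.Ioi x) := by
        simpa using this.integrableOn
      simpa [div_mul_eq_mul_div, IntegrableOn] using h2.div_const x
    · exact measurableSet_Ioi
    · intro u hu
      have hux : x ≤ u := (Set.mem_Ioi.mp hu).le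
      have h1 : (1:ℝ) ≤ u / x := (one_le_div hx).mpr hux
      nlinarith [Real.exp_pos (-u^2)]
  have heq : ∫ u in Set.Ioi x, (u/x) * Real.exp (-u^2)
      = (∫ u in Set.Ioi x, u * Real.exp (-u^2)) / x := by
    rw [← integral_div]
    congr 1; ext u; ring
  rw [heq, integral_Ioi_mul_exp] at hmono
  calc (2 / Real.sqrt π) * ∫ u in Set.Ioi x, Real.exp (-u^2)
      ≤ (2 / Real.sqrt π) * (Real.exp (-x^2) / 2 / x) := by
        apply mul_le_mul_of_nonneg_left hmono (by positivity)
    _ = Real.exp (-x^2) / (x * Real.sqrt π) := by field_simp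

lemma mills_fbar {m s : ℝ} (hm : 2 ≤ m) (hs : 0 < s) :
    (m-1)^2 * s * erfc ((m-1) * Real.sqrt s / Real.sqrt 2)
      ≤ Real.sqrt (2/π) * (m-1) * Real.sqrt s * Real.exp (-((m-1)^2 * s)/2) := by
  have hm1 : (0:ℝ) < m - 1 := by linarith
  have hss : 0 < Real.sqrt s := Real.sqrt_pos.mpr hs
  set a := (m-1) * Real.sqrt s with hadef
  have ha : 0 < a := by positivity
  have h2 : (0:ℝ) < Real.sqrt 2 := by positivity
  have hp : (0:ℝ) < Real.sqrt π := Real.sqrt_pos.mpr Real.pi_pos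
  have ha2 : (m-1)^2 * s = a^2 := by rw [hadef, mul_pow, Real.sq_sqrt hs.le]
  have hx2 : (a / Real.sqrt 2)^2 = a^2/2 := by
    rw [div_pow, Real.sq_sqrt (by norm_num : (0:ℝ) ≤ 2)]
  have hmills := erfc_le (x := a / Real.sqrt 2) (by positivity)
  rw [hx2] at hmills
  have hsqrt : Real.sqrt (2/π) = Real.sqrt 2 / Real.sqrt π :=
    Real.sqrt_div (by norm_num) π
  rw [ha2, hsqrt]
  calc a^2 * erfc (a / Real.sqrt 2)
      ≤ a^2 * (Real.exp (-(a^2/2)) / (a / Real.sqrt 2 * Real.sqrt π)) :=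
        mul_le_mul_of_nonneg_left hmills (sq_nonneg a)
    _ = Real.sqrt 2 / Real.sqrt π * a * Real.exp (-a^2/2) := by
        field_simp
    _ = Real.sqrt 2 / Real.sqrt π * (m-1) * Real.sqrt s * Real.exp (-a^2/2) := by
        rw [hadef]; ring

lemma gaussianPDFReal_anti (v : NNReal) {b x : ℝ} (h : b^2 ≤ x^2) :
    gaussianPDFReal 0 v x ≤ gaussianPDFReal 0 v b := by
  unfold gaussianPDFReal
  apply mul_le_mul_of_nonneg_left _ (by positivity)
  apply Real.exp_le_exp.mpr
  simp only [sub_zero]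
  rcases eq_or_lt_of_le (show (0:NNReal) ≤ v from zero_le) with hv | hv
  · simp [← hv]
  · have h2v : (0:ℝ) < 2 * (v:ℝ) := by positivity
    have hxb : -x^2 ≤ -b^2 := by linarith
    gcongr

lemma gauss_Icc (v : NNReal) (hv : 0 < v) {b : ℝ} (hb : 0 ≤ b) :
    gaussianReal 0 v (Set.Icc (-b) b) = ENNReal.ofReal (erf (b / Real.sqrt (2*v))) := by
  have hv' : v ≠ 0 := hv.ne'
  have hvpos : (0:ℝ) < (v:ℝ) := by exact_mod_cast hv
  have hσ : (0:ℝ) < Real.sqrt (2*v) := by positivity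
  have hp : (0:ℝ) < Real.sqrt π := Real.sqrt_pos.mpr Real.pi_pos
  set σ := Real.sqrt (2*(v:ℝ)) with hσdef
  rw [gaussianReal_apply_eq_integral 0 hv']
  congr 1
  have key : ∀ x : ℝ, gaussianPDFReal 0 v x
      = (Real.sqrt (2*π*(v:ℝ)))⁻¹ * Real.exp (-(x / σ)^2) := by
    intro x
    unfold gaussianPDFReal
    congr 1
    rw [sub_zero, div_pow, hσdef, Real.sq_sqrt (by positivity), neg_div]
  rw [integral_Icc_eq_integral_Ioc, ← intervalIntegral.integral_of_le (by linarith)]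
  simp_rw [key]
  rw [intervalIntegral.integral_const_mul,
    intervalIntegral.integral_comp_div (f := fun u => Real.exp (-u^2)) (c := σ) hσ.ne']
  have hneg : -b / σ = -(b/σ) := by ring
  have heven : (∫ u in (-(b/σ))..(b/σ), Real.exp (-u^2))
      = 2 * ∫ u in (0:ℝ)..(b/σ), Real.exp (-u^2) := by
    rw [← intervalIntegral.integral_add_adjacent_intervals (intInt_exp (-(b/σ)) 0)
      (intInt_exp 0 (b/σ))]
    have h1 : (∫ u in (-(b/σ))..(0:ℝ), Real.exp (-u^2))
        = ∫ u in (0:ℝ)..(b/σ), Real.exp (-u^2) := by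
      have h2 := intervalIntegral.integral_comp_neg (a := (0:ℝ)) (b := b/σ)
        (fun u => Real.exp (-u^2))
      simp only [neg_zero, neg_neg] at h2
      rw [← h2]
      congr 1
      ext u
      ring_nf
    linarith
  rw [hneg, heven]
  have hsplit : Real.sqrt (2*π*(v:ℝ)) = Real.sqrt π * σ := by
    rw [hσdef, ← Real.sqrt_mul Real.pi_pos.le]
    congr 1
    ring
  unfold erf
  rw [smul_eq_mul, hsplit]
  field_simp

lemma gauss_bathtub (v : NNReal) (hv : 0 < v) {A : Set ℝ} (hA : MeasurableSet A) {b : ℝ}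
    (hb : 0 ≤ b) (hvol : volume A ≤ ENNReal.ofReal (2*b)) :
    gaussianReal 0 v A ≤ gaussianReal 0 v (Set.Icc (-b) b) := by
  have hv' : v ≠ 0 := hv.ne'
  set C := Set.Icc (-b) b with hC
  have hCmeas : MeasurableSet C := measurableSet_Icc
  set pb := ENNReal.ofReal (gaussianPDFReal 0 v b) with hpb
  have hvolC : volume C = ENNReal.ofReal (2*b) := by
    rw [hC, Real.volume_Icc]
    congr 1
    ring
  have hACfin : volume (A ∩ C) ≠ ⊤ := by
    apply ne_of_lt
    calc volume (A ∩ C) ≤ volume C := measure_mono Set.inter_subset_right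
      _ < ⊤ := by rw [hvolC]; exact ENNReal.ofReal_lt_top
  -- volume (A \ C) ≤ volume (C \ A)
  have hvle : volume (A \ C) ≤ volume (C \ A) := by
    have h1 : volume (A ∩ C) + volume (A \ C) = volume A := measure_inter_add_diff A hCmeas
    have h2 : volume (C ∩ A) + volume (C \ A) = volume C := measure_inter_add_diff C hA
    rw [Set.inter_comm] at h2
    have h3 : volume (A ∩ C) + volume (A \ C) ≤ volume (A ∩ C) + volume (C \ A) := by
      rw [h1, h2, hvolC]; exact hvol
    exact (ENNReal.add_le_add_iff_left hACfin).mp h3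
  -- upper bound for μ (A \ C)
  have hup : gaussianReal 0 v (A \ C) ≤ pb * volume (A \ C) := by
    rw [gaussianReal_apply 0 hv']
    calc (∫⁻ x in A \ C, gaussianPDF 0 v x)
        ≤ ∫⁻ _ in A \ C, pb := by
          apply setLIntegral_mono measurable_const
          intro x hx
          apply ENNReal.ofReal_le_ofReal
          apply gaussianPDFReal_anti
          have hxC : x ∉ C := hx.2
          rw [hC, Set.mem_Icc] at hxC
          push_neg at hxC
          rcases lt_or_ge x (-b) with h | h
          · nlinarith
          · have := hxC h
            nlinarith
      _ = pb * volume (A \ C) := by rw [setLIntegral_const]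
  -- lower bound for μ (C \ A)
  have hlow : pb * volume (C \ A) ≤ gaussianReal 0 v (C \ A) := by
    rw [gaussianReal_apply 0 hv']
    calc pb * volume (C \ A) = ∫⁻ _ in C \ A, pb := by rw [setLIntegral_const]
      _ ≤ ∫⁻ x in C \ A, gaussianPDF 0 v x := by
          apply setLIntegral_mono (measurable_gaussianPDF 0 v)
          intro x hx
          apply ENNReal.ofReal_le_ofReal
          apply gaussianPDFReal_anti
          have hxC : x ∈ C := hx.1
          rw [hC, Set.mem_Icc] at hxC
          nlinarith [hxC.1, hxC.2]
  calc gaussianReal 0 v A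
      = gaussianReal 0 v (A ∩ C) + gaussianReal 0 v (A \ C) :=
        (measure_inter_add_diff A hCmeas).symm
    _ ≤ gaussianReal 0 v (A ∩ C) + pb * volume (A \ C) := by gcongr
    _ ≤ gaussianReal 0 v (A ∩ C) + pb * volume (C \ A) := by gcongr
    _ ≤ gaussianReal 0 v (A ∩ C) + gaussianReal 0 v (C \ A) := by gcongr
    _ = gaussianReal 0 v (C ∩ A) + gaussianReal 0 v (C \ A) := by rw [Set.inter_comm]
    _ = gaussianReal 0 v C := measure_inter_add_diff C hA


/-- probabilistic core of Theorem 2 of the paper: the probability that a quantizer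
with `M` levels changes its output due to the legitimate signal `r` is at most `f̄(M, R/v)`. -/
theorem prob_quantizer_changes_le_fbar {Ω : Type*} [MeasurableSpace Ω] (P : Measure Ω)
    [IsProbabilityMeasure P] (v : NNReal) (R : ℝ) (hv : 0 < v) (hR : 0 < R)
    (M : ℕ) (hM : 2 ≤ M) (Γ : Finset ℝ) (hΓ : Γ.Nonempty) (hcard : Γ.card ≤ M - 1)
    (α : Type*) (Q : ℝ → α)
    (hQ : ∀ x y : ℝ, x ≤ y → (∀ γ ∈ Γ, ¬(x < γ ∧ γ ≤ y)) → Q x = Q y)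
    (d r : Ω → ℝ) (hd : Measurable d) (hr : Measurable r)
    (hindep : IndepFun d r P)
    (hd_gauss : P.map d = gaussianReal 0 v)
    (hr_sq : MemLp r 2 P) (hr_bound : ∫ ω, (r ω) ^ 2 ∂P ≤ R) :
    P {ω | Q (d ω + r ω) ≠ Q (d ω)} ≤ ENNReal.ofReal (fbar M (R / v)) := by
  have hvpos : (0:ℝ) < (v:ℝ) := by exact_mod_cast hv
  have hMR : (2:ℝ) ≤ (M:ℝ) := by exact_mod_cast hM
  have hM1 : (0:ℝ) < (M:ℝ) - 1 := by linarith
  have hσ : (0:ℝ) < Real.sqrt (2*(v:ℝ)) := by positivity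
  have hp : (0:ℝ) < Real.sqrt π := Real.sqrt_pos.mpr Real.pi_pos
  set c : ℝ := ((M:ℝ) - 1) / Real.sqrt (2*(v:ℝ)) with hcdef
  have hc : 0 < c := by positivity
  -- the enlarged measurable event
  set S : Set (ℝ × ℝ) := ⋃ γ ∈ (Γ : Set ℝ), {p : ℝ × ℝ | |p.2 - γ| ≤ |p.1|} with hSdef
  have hS : MeasurableSet S := by
    apply MeasurableSet.biUnion Γ.countable_toSet
    intro γ _
    exact measurableSet_le ((measurable_snd.sub measurable_const).abs) measurable_fst.abs
  set E : Set Ω := (fun ω => (r ω, d ω)) ⁻¹' S with hEdef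
  -- Step 1: inclusion
  have hsub : {ω | Q (d ω + r ω) ≠ Q (d ω)} ⊆ E := by
    intro ω hω
    simp only [Set.mem_setOf_eq] at hω
    rcases le_or_gt 0 (r ω) with hrω | hrω
    · have h1 : ¬ (∀ γ ∈ Γ, ¬(d ω < γ ∧ γ ≤ d ω + r ω)) := by
        intro hcon
        exact hω (hQ (d ω) (d ω + r ω) (by linarith) hcon).symm
      push_neg at h1
      obtain ⟨γ, hγΓ, hγ⟩ := h1
      simp only [hEdef, hSdef, Set.mem_preimage, Set.mem_iUnion]
      exact ⟨γ, hγΓ, by simp only [Set.mem_setOf_eq]; rw [abs_of_nonneg hrω]; rw [abs_le]; constructor <;> linarith [hγ.1, hγ.2]⟩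
    · have h1 : ¬ (∀ γ ∈ Γ, ¬(d ω + r ω < γ ∧ γ ≤ d ω)) := by
        intro hcon
        exact hω (hQ (d ω + r ω) (d ω) (by linarith) hcon)
      push_neg at h1
      obtain ⟨γ, hγΓ, hγ⟩ := h1
      simp only [hEdef, hSdef, Set.mem_preimage, Set.mem_iUnion]
      refine ⟨γ, hγΓ, ?_⟩
      simp only [Set.mem_setOf_eq]
      rw [abs_of_neg hrω, abs_le]
      constructor <;> linarith [hγ.1, hγ.2]
  haveI hPd : IsProbabilityMeasure (P.map d) := by rw [hd_gauss]; infer_instance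
  haveI hPr : IsProbabilityMeasure (P.map r) := Measure.isProbabilityMeasure_map hr.aemeasurable
  -- Step 2: product representation
  have hmap : P.map (fun ω => (r ω, d ω)) = (P.map r).prod (P.map d) :=
    (indepFun_iff_map_prod_eq_prod_map_map hr.aemeasurable hd.aemeasurable).mp hindep.symm
  have hPE : P E = ∫⁻ t, (gaussianReal 0 v) (Prod.mk t ⁻¹' S) ∂(P.map r) := by
    rw [hEdef, ← Measure.map_apply (hr.prodMk hd) hS, hmap, Measure.prod_apply hS, ← hd_gauss]
  -- Step 3: slice bound
  have hslice : ∀ t : ℝ, (gaussianReal 0 v) (Prod.mk t ⁻¹' S)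
      ≤ ENNReal.ofReal (erf (c * |t|)) := by
    intro t
    have hsliceset : Prod.mk t ⁻¹' S = ⋃ γ ∈ (Γ : Set ℝ), Set.Icc (γ - |t|) (γ + |t|) := by
      rw [hSdef]
      ext x
      simp only [Set.preimage_iUnion, Set.mem_iUnion, Set.mem_preimage, Set.mem_setOf_eq,
        Set.mem_Icc]
      constructor
      · rintro ⟨γ, hγ, h⟩
        rw [abs_le] at h
        exact ⟨γ, hγ, by constructor <;> linarith [h.1, h.2]⟩
      · rintro ⟨γ, hγ, h⟩
        exact ⟨γ, hγ, by rw [abs_le]; constructor <;> linarith [h.1, h.2]⟩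
    rw [hsliceset]
    have hvol : volume (⋃ γ ∈ (Γ : Set ℝ), Set.Icc (γ - |t|) (γ + |t|))
        ≤ ENNReal.ofReal (2 * (((M:ℝ)-1) * |t|)) := by
      calc volume (⋃ γ ∈ (Γ : Set ℝ), Set.Icc (γ - |t|) (γ + |t|))
          ≤ ∑ γ ∈ Γ, volume (Set.Icc (γ - |t|) (γ + |t|)) := measure_biUnion_finset_le Γ _
        _ = ∑ γ ∈ Γ, ENNReal.ofReal (2 * |t|) := by
            apply Finset.sum_congr rfl
            intro γ _
            rw [Real.volume_Icc]
            congr 1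
            ring
        _ = (Γ.card : ℝ≥0∞) * ENNReal.ofReal (2 * |t|) := by
            rw [Finset.sum_const, nsmul_eq_mul]
        _ = ENNReal.ofReal ((Γ.card : ℝ) * (2 * |t|)) := by
            rw [← ENNReal.ofReal_natCast Γ.card, ← ENNReal.ofReal_mul (by positivity)]
        _ ≤ ENNReal.ofReal (2 * (((M:ℝ)-1) * |t|)) := by
            apply ENNReal.ofReal_le_ofReal
            have hcardR : (Γ.card : ℝ) ≤ (M:ℝ) - 1 := by
              have h1 : ((M - 1 : ℕ) : ℝ) = (M:ℝ) - 1 := by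
                rw [Nat.cast_sub (by omega)]; norm_num
              rw [← h1]
              exact_mod_cast hcard
            nlinarith [abs_nonneg t]
    calc (gaussianReal 0 v) (⋃ γ ∈ (Γ : Set ℝ), Set.Icc (γ - |t|) (γ + |t|))
        ≤ (gaussianReal 0 v) (Set.Icc (-((((M:ℝ)-1)) * |t|)) ((((M:ℝ)-1)) * |t|)) := by
          apply gauss_bathtub v hv _ (by positivity) hvol
          exact MeasurableSet.biUnion Γ.countable_toSet (fun γ _ => measurableSet_Icc)
      _ = ENNReal.ofReal (erf ((((M:ℝ)-1)) * |t| / Real.sqrt (2*(v:ℝ)))) :=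
          gauss_Icc v hv (by positivity)
      _ = ENNReal.ofReal (erf (c * |t|)) := by
          rw [hcdef]
          congr 2
          ring
  -- Step 4: integrate the tangent-line bound
  set A : ℝ := erf (c * Real.sqrt R) with hAdef
  set K : ℝ := c * Real.exp (-(c * Real.sqrt R)^2) / (Real.sqrt π * Real.sqrt R) with hKdef
  have hK : 0 ≤ K := by positivity
  have hg_nonneg : ∀ t : ℝ, 0 ≤ A + K * (t^2 - R) := fun t =>
    (erf_nonneg_s17 (by positivity)).trans (erf_tangent hc hR t)
  have hint2 : Integrable (fun t : ℝ => t^2) (P.map r) := by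
    rw [integrable_map_measure ((continuous_pow 2).aestronglyMeasurable) hr.aemeasurable]
    exact hr_sq.integrable_sq
  have hsub2 : Integrable (fun t : ℝ => t^2 - R) (P.map r) := by
    exact hint2.sub (integrable_const R)
  have hgint' : Integrable (fun t : ℝ => K * (t^2 - R)) (P.map r) := hsub2.const_mul K
  have hgint : Integrable (fun t : ℝ => A + K * (t^2 - R)) (P.map r) :=
    (integrable_const A).add hgint'
  have hI : (∫ t : ℝ, t^2 ∂(P.map r)) ≤ R := by
    rw [integral_map hr.aemeasurable ((continuous_pow 2).aestronglyMeasurable)]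
    exact hr_bound
  have hmean : (∫ t : ℝ, (A + K * (t^2 - R)) ∂(P.map r)) ≤ A := by
    rw [integral_add (integrable_const A) hgint', integral_const, integral_const_mul,
      integral_sub hint2 (integrable_const R), integral_const]
    simp only [measure_univ, probReal_univ, ENNReal.toReal_one, one_smul, smul_eq_mul, one_mul]
    nlinarith [hK, hI]
  have hstep5 : (∫⁻ t, ENNReal.ofReal (erf (c * |t|)) ∂(P.map r)) ≤ ENNReal.ofReal A := by
    calc (∫⁻ t, ENNReal.ofReal (erf (c * |t|)) ∂(P.map r))
        ≤ ∫⁻ t, ENNReal.ofReal (A + K * (t^2 - R)) ∂(P.map r) :=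
          lintegral_mono fun t => ENNReal.ofReal_le_ofReal (erf_tangent hc hR t)
      _ = ENNReal.ofReal (∫ t : ℝ, (A + K * (t^2 - R)) ∂(P.map r)) :=
          (MeasureTheory.ofReal_integral_eq_lintegral_ofReal hgint
            (Filter.Eventually.of_forall hg_nonneg)).symm
      _ ≤ ENNReal.ofReal A := ENNReal.ofReal_le_ofReal hmean
  have hAfbar : A ≤ fbar M (R / (v:ℝ)) := by
    have harg : c * Real.sqrt R = ((M:ℝ)-1) * Real.sqrt (R/(v:ℝ)) / Real.sqrt 2 := by
      rw [hcdef, Real.sqrt_div hR.le,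
        show Real.sqrt (2*(v:ℝ)) = Real.sqrt 2 * Real.sqrt (v:ℝ) from
          Real.sqrt_mul (by norm_num) _]
      field_simp
    have hsv : 0 < R / (v:ℝ) := by positivity
    have hmills := mills_fbar (m := (M:ℝ)) (s := R/(v:ℝ)) hMR hsv
    rw [hAdef, harg]
    unfold fbar
    linarith [hmills]
  calc P {ω | Q (d ω + r ω) ≠ Q (d ω)} ≤ P E := measure_mono hsub
    _ = ∫⁻ t, (gaussianReal 0 v) (Prod.mk t ⁻¹' S) ∂(P.map r) := hPE
    _ ≤ ∫⁻ t, ENNReal.ofReal (erf (c * |t|)) ∂(P.map r) := lintegral_mono hslice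
    _ ≤ ENNReal.ofReal A := hstep5
    _ ≤ ENNReal.ofReal (fbar M (R / (v:ℝ))) := ENNReal.ofReal_le_ofReal hAfbar
end
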